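/- (Extrapolation error bound under coverability.) Let Z be a countable set, μ* a probability distribution on Z, C > 0, and let d^(1),...,d^(T) be probability distributions on Z with d^(t)(z) ≤ C·μ*(z) for all t and z. Define D^(t)(z) := sum_{i<t} d^(i)(z). Then sum_{t=1}^T sum_{z ∈ Z} (d^(t)(z))² / (D^(t)(z) + C·μ*(z)) ≤ 2·C·log(T + 1). -/

import Mathlib

/-!
Fix `z` and write `a = C μ(z)`, `x_t = d^(t)(z) ∈ [0, a]` and `S_t = ∑_{i<t} x_i`. Since
`u ≤ 2 log (1 + u)` for `u ∈ [0, 1]`, taking `u = x_t / (S_t + a)` gives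
`x_t² / (S_t + a) ≤ a u ≤ 2a (log (S_{t+1} + a) - log (S_t + a))`, which telescopes to
`2a log ((S_T + a) / a) ≤ 2a log (T + 1)` because `S_T ≤ T a`. Summing this over `z`
(the finite sum over `t` commutes with the sum over `z`) gives
`2 C log (T + 1) ∑ μ = 2 C log (T + 1)`.
-/

open Finset Real

lemma le_two_mul_log_one_add {u : ℝ} (hu₀ : 0 ≤ u) (hu₁ : u ≤ 1) : u ≤ 2 * log (1 + u) := by
  have hu : 0 < 1 + u := by linarith
  have h : u / (1 + u) ≤ log (1 + u) := by
    convert one_sub_inv_le_log_of_pos hu using 1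
    field_simp
    ring
  have : u / 2 ≤ u / (1 + u) := div_le_div_of_nonneg_left hu₀ hu (by linarith)
  linarith

lemma sq_div_le_two_mul_log_sub {a b s : ℝ} (ha : 0 < a) (hs : 0 ≤ s) (hb : 0 ≤ b)
    (hba : b ≤ a) : b ^ 2 / (s + a) ≤ 2 * a * (log (s + b + a) - log (s + a)) := by
  have hsa : 0 < s + a := by linarith
  have hu₀ : 0 ≤ b / (s + a) := div_nonneg hb hsa.le
  have hu₁ : b / (s + a) ≤ 1 := (div_le_one hsa).2 (by linarith)
  have hlog : log (s + b + a) - log (s + a) = log (1 + b / (s + a)) := by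
    rw [← log_div (by linarith) hsa.ne']
    congr 1
    field_simp
    ring
  calc b ^ 2 / (s + a) = b * (b / (s + a)) := by ring
    _ ≤ a * (2 * log (1 + b / (s + a))) :=
        mul_le_mul hba (le_two_mul_log_one_add hu₀ hu₁) hu₀ ha.le
    _ = 2 * a * (log (s + b + a) - log (s + a)) := by rw [hlog]; ring

lemma sum_sq_div_partialSum_le_two_mul_log_sub {a : ℝ} (ha : 0 < a) {b : ℕ → ℝ} {N : ℕ}
    (hb : ∀ n < N, 0 ≤ b n) (hba : ∀ n < N, b n ≤ a) :
    ∑ n ∈ range N, b n ^ 2 / (∑ i ∈ range n, b i + a)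
      ≤ 2 * a * (log (∑ i ∈ range N, b i + a) - log a) := by
  calc ∑ n ∈ range N, b n ^ 2 / (∑ i ∈ range n, b i + a)
      ≤ ∑ n ∈ range N, 2 * a * (log (∑ i ∈ range (n + 1), b i + a)
          - log (∑ i ∈ range n, b i + a)) := by
        refine sum_le_sum fun n hn => ?_
        rw [mem_range] at hn
        have hpartial : 0 ≤ ∑ i ∈ range n, b i :=
          sum_nonneg fun i hi => hb i ((mem_range.1 hi).trans hn)
        rw [sum_range_succ]
        exact sq_div_le_two_mul_log_sub ha hpartial (hb n hn) (hba n hn)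
    _ = 2 * a * (log (∑ i ∈ range N, b i + a) - log a) := by
        rw [← mul_sum, sum_range_sub (fun n => log (∑ i ∈ range n, b i + a)), sum_range_zero,
          zero_add]

lemma sum_sq_div_partialSum_le_two_mul_log {a : ℝ} {b : ℕ → ℝ} {N : ℕ}
    (hb : ∀ n < N, 0 ≤ b n) (hba : ∀ n < N, b n ≤ a) :
    ∑ n ∈ range N, b n ^ 2 / (∑ i ∈ range n, b i + a) ≤ 2 * a * log (N + 1) := by
  rcases N.eq_zero_or_pos with rfl | hN
  · simp
  have ha : 0 ≤ a := (hb 0 hN).trans (hba 0 hN)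
  rcases ha.eq_or_lt with rfl | ha
  · rw [sum_eq_zero fun n hn =>
      by rw [le_antisymm (hba n (mem_range.1 hn)) (hb n (mem_range.1 hn))]; simp]
    simp
  have hsum₀ : 0 ≤ ∑ i ∈ range N, b i := sum_nonneg fun i hi => hb i (mem_range.1 hi)
  have hsum : ∑ i ∈ range N, b i ≤ N * a := by
    simpa using sum_le_sum fun i hi => hba i (mem_range.1 hi)
  have hgrowth : log (∑ i ∈ range N, b i + a) - log a ≤ log (N + 1) := by
    rw [← log_div (by linarith) ha.ne']
    exact log_le_log (by positivity) ((div_le_iff₀ ha).2 (by linarith))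
  calc _ ≤ 2 * a * (log (∑ i ∈ range N, b i + a) - log a) :=
        sum_sq_div_partialSum_le_two_mul_log_sub ha hb hba
    _ ≤ 2 * a * log (N + 1) := by gcongr

lemma Fin.sum_Iio_eq_sum_range {M : Type*} [AddCommMonoid M] {n : ℕ} (f : ℕ → M) (t : Fin n) :
    ∑ i ∈ Iio t, f i = ∑ i ∈ range t, f i := by
  rw [← Nat.Iio_eq_range, ← Fin.map_valEmbedding_Iio, sum_map]
  rfl

lemma sum_sq_div_sum_Iio_add_le_two_mul_log {a : ℝ} {N : ℕ} (x : Fin N → ℝ)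
    (hx : ∀ t, 0 ≤ x t) (hxa : ∀ t, x t ≤ a) :
    ∑ t, x t ^ 2 / (∑ i ∈ Iio t, x i + a) ≤ 2 * a * log (N + 1) := by
  set b : ℕ → ℝ := fun n => if h : n < N then x ⟨n, h⟩ else 0
  have hxb : x = fun t : Fin N => b t := funext fun t => by simp [b]
  have hb : ∀ n < N, 0 ≤ b n := fun n hn => by simpa [b, hn] using hx ⟨n, hn⟩
  have hba : ∀ n < N, b n ≤ a := fun n hn => by simpa [b, hn] using hxa ⟨n, hn⟩
  rw [hxb]
  simp_rw [Fin.sum_Iio_eq_sum_range b]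
  rw [Fin.sum_univ_eq_sum_range (fun n => b n ^ 2 / (∑ i ∈ range n, b i + a))]
  exact sum_sq_div_partialSum_le_two_mul_log hb hba

lemma sq_div_add_le_self {x s a : ℝ} (hx : 0 ≤ x) (hs : 0 ≤ s) (hxa : x ≤ a) :
    x ^ 2 / (s + a) ≤ x := by
  rcases hx.eq_or_lt with rfl | hx
  · simp
  rw [div_le_iff₀ (by linarith), sq]
  exact mul_le_mul_of_nonneg_left (by linarith) hx.le

theorem extrapolation_error_bound_general
    {Z : Type*} {T : ℕ}
    (d : Fin T → Z → ℝ) (μ : Z → ℝ) (C : ℝ)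
    (hd0 : ∀ t z, 0 ≤ d t z)
    (hμsum : ∑' z, μ z = 1)
    (hcov : ∀ t z, d t z ≤ C * μ z) :
    ∑ t : Fin T, ∑' z : Z,
        (d t z) ^ 2 / ((∑ i ∈ Finset.Iio t, d i z) + C * μ z)
      ≤ 2 * C * Real.log (T + 1) := by
  have hμ : Summable μ := by
    by_contra h
    simp [tsum_eq_zero_of_not_summable h] at hμsum
  have hsummand : ∀ t, Summable fun z => d t z ^ 2 / (∑ i ∈ Iio t, d i z + C * μ z) := by
    intro t
    refine (hμ.mul_left C).of_nonneg_of_le (fun z => ?_) (fun z => ?_)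
    · exact div_nonneg (sq_nonneg _)
        (add_nonneg (sum_nonneg fun i _ => hd0 i z) ((hd0 t z).trans (hcov t z)))
    · exact (sq_div_add_le_self (hd0 t z) (sum_nonneg fun i _ => hd0 i z) (hcov t z)).trans
        (hcov t z)
  calc ∑ t, ∑' z, d t z ^ 2 / (∑ i ∈ Iio t, d i z + C * μ z)
      = ∑' z, ∑ t, d t z ^ 2 / (∑ i ∈ Iio t, d i z + C * μ z) :=
        (Summable.tsum_finsetSum fun t _ => hsummand t).symm
    _ ≤ ∑' z, 2 * C * log (T + 1) * μ z :=
        Summable.tsum_le_tsum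
          (fun z => (sum_sq_div_sum_Iio_add_le_two_mul_log (d · z) (hd0 · z) (hcov · z)).trans_eq
            (by ring))
          (summable_sum fun t _ => hsummand t) (hμ.mul_left _)
    _ = 2 * C * log (T + 1) := by rw [tsum_mul_left, hμsum, mul_one]

/-- Extrapolation error bound under coverability. -/
theorem extrapolation_error_bound
    {Z : Type*} [Countable Z] {T : ℕ}
    (d : Fin T → Z → ℝ) (μ : Z → ℝ) (C : ℝ) (hC : 0 < C)
    (hd0 : ∀ t z, 0 ≤ d t z) (hμ0 : ∀ z, 0 ≤ μ z)
    (hdsum : ∀ t, ∑' z, d t z = 1) (hμsum : ∑' z, μ z = 1)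
    (hcov : ∀ t z, d t z ≤ C * μ z) :
    ∑ t : Fin T, ∑' z : Z,
        (d t z) ^ 2 / ((∑ i ∈ Finset.Iio t, d i z) + C * μ z)
      ≤ 2 * C * Real.log (T + 1) :=
  extrapolation_error_bound_general d μ C hd0 hμsum hcov
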